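/- Let G be a simple graph with an edge coloring c, let M be a rainbow matching in G of size s, and let R be a color not appearing on any edge of M. Suppose the spanning subgraph of G consisting of all edges of color R has at least 2s + 1 connected components that each contain at least one edge. Then there exists an edge e of G with c(e) = R whose endpoints are both not covered by M; in particular, M together with e is a rainbow matching of size s + 1. -/

import Mathlib

variable {V : Type*} {α : Type*}

/-- `M` is a rainbow matching in `G` under the edge coloring `c`: its elements are
edges of `G`, pairwise vertex-disjoint, and receive pairwise distinct colors. -/
def IsRainbowMatching (G : SimpleGraph V) (c : Sym2 V → α) (M : Finset (Sym2 V)) : Prop :=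
  ↑M ⊆ G.edgeSet ∧
  (∀ e ∈ M, ∀ f ∈ M, e ≠ f → ∀ v : V, v ∈ e → v ∉ f) ∧
  ∀ e ∈ M, ∀ f ∈ M, c e = c f → e = f

/-- The color degree of `v`: the number of distinct colors appearing on edges incident to `v`. -/
noncomputable def colorDegree (G : SimpleGraph V) (c : Sym2 V → α) (v : V) : ℕ :=
  (c '' G.incidenceSet v).ncard

/-- The total color degree of `G`: the sum of color degrees over all vertices. -/
noncomputable def totalColorDegree [Fintype V] (G : SimpleGraph V) (c : Sym2 V → α) : ℕ :=
  ∑ v : V, colorDegree G c v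


/-- The color class of `R`: the spanning subgraph of `G` whose edges are exactly the
edges of color `R`. -/
def colorClass (G : SimpleGraph V) (c : Sym2 V → α) (R : α) : SimpleGraph V where
  Adj a b := G.Adj a b ∧ c s(a, b) = R
  symm := by
    constructor
    intro a b h
    exact ⟨h.1.symm, by rw [Sym2.eq_swap]; exact h.2⟩
  loopless := ⟨fun a h => G.loopless.irrefl a h.1⟩

/-!
The edges of `M` cover at most `2 * s` vertices, and these meet at most `2 * s` components of
the color class of `R`. One of its `2 * s + 1` components with an edge is therefore untouched
by `M`, and any edge in it has color `R`, a color missing from `M`, and endpoints outside `M`.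
-/

theorem Finset.card_biUnion_toFinset_le [DecidableEq V] (M : Finset (Sym2 V)) :
    (M.biUnion Sym2.toFinset).card ≤ 2 * M.card := by
  rw [mul_comm]
  refine Finset.card_biUnion_le_card_mul M _ 2 fun e _ => ?_
  rw [Sym2.card_toFinset]
  split_ifs <;> omega

theorem SimpleGraph.exists_adj_notMem_of_card_lt (H : SimpleGraph V) (S : Finset V)
    (hS : S.card < {K : H.ConnectedComponent |
      ∃ a b : V, H.Adj a b ∧ H.connectedComponentMk a = K}.ncard) :
    ∃ a b : V, H.Adj a b ∧ a ∉ S ∧ b ∉ S := by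
  set A := {K : H.ConnectedComponent | ∃ a b : V, H.Adj a b ∧ H.connectedComponentMk a = K}
  have hnotsub : ¬ A ⊆ H.connectedComponentMk '' S := fun hsub => hS.not_ge <|
    calc A.ncard ≤ (H.connectedComponentMk '' S).ncard :=
          Set.ncard_le_ncard hsub (S.finite_toSet.image _)
      _ ≤ (S : Set V).ncard := Set.ncard_image_le S.finite_toSet
      _ = S.card := Set.ncard_coe_finset S
  obtain ⟨K, ⟨a, b, hab, rfl⟩, hK⟩ := Set.not_subset.mp hnotsub
  refine ⟨a, b, hab, fun ha => hK ⟨a, ha, rfl⟩, fun hb => hK ⟨b, hb, ?_⟩⟩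
  exact SimpleGraph.ConnectedComponent.sound hab.symm.reachable

theorem IsRainbowMatching.insert [DecidableEq V] {G : SimpleGraph V} {c : Sym2 V → α}
    {M : Finset (Sym2 V)} {e : Sym2 V} (hM : IsRainbowMatching G c M) (he : e ∈ G.edgeSet)
    (hfree : ∀ w : V, w ∈ e → ∀ f ∈ M, w ∉ f) (hcol : ∀ f ∈ M, c f ≠ c e) :
    IsRainbowMatching G c (insert e M) := by
  obtain ⟨hMG, hMdisj, hMcol⟩ := hM
  refine ⟨?_, ?_, ?_⟩
  · rw [Finset.coe_insert]
    exact Set.insert_subset he hMG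
  · intro f hf g hg hfg v hvf hvg
    rcases Finset.mem_insert.mp hf with rfl | hfM <;>
      rcases Finset.mem_insert.mp hg with rfl | hgM
    · exact hfg rfl
    · exact hfree v hvf g hgM hvg
    · exact hfree v hvg f hfM hvf
    · exact hMdisj f hfM g hgM hfg v hvf hvg
  · intro f hf g hg hfg
    rcases Finset.mem_insert.mp hf with rfl | hfM <;>
      rcases Finset.mem_insert.mp hg with rfl | hgM
    · rfl
    · exact absurd hfg.symm (hcol g hgM)
    · exact absurd hfg (hcol f hfM)
    · exact hMcol f hfM g hgM hfg

theorem extend_at_many_color_class_components_general [DecidableEq V]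
    (G : SimpleGraph V) (c : Sym2 V → α)
    (M : Finset (Sym2 V)) (s : ℕ) (hM : IsRainbowMatching G c M) (hcard : M.card = s)
    (R : α) (hR : ∀ e ∈ M, c e ≠ R)
    (hcomp : 2 * s + 1 ≤
      {K : (colorClass G c R).ConnectedComponent |
        ∃ a b : V, (colorClass G c R).Adj a b ∧
          (colorClass G c R).connectedComponentMk a = K}.ncard) :
    ∃ e ∈ G.edgeSet, c e = R ∧ (∀ w : V, w ∈ e → ∀ f ∈ M, w ∉ f) ∧
      IsRainbowMatching G c (insert e M) ∧ (insert e M).card = s + 1 := by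
  obtain ⟨a, b, hab, ha, hb⟩ := (colorClass G c R).exists_adj_notMem_of_card_lt
    (M.biUnion Sym2.toFinset) (by have := M.card_biUnion_toFinset_le; omega)
  have hfree : ∀ w : V, w ∈ s(a, b) → ∀ f ∈ M, w ∉ f := by
    intro w hw f hf hwf
    have hw' : w ∈ M.biUnion Sym2.toFinset :=
      Finset.mem_biUnion.2 ⟨f, hf, Sym2.mem_toFinset.2 hwf⟩
    rcases Sym2.mem_iff.mp hw with rfl | rfl
    exacts [ha hw', hb hw']
  have hcol : ∀ f ∈ M, c f ≠ c s(a, b) := hab.2 ▸ hR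
  refine ⟨s(a, b), hab.1, hab.2, hfree, hM.insert hab.1 hfree hcol, ?_⟩
  rw [Finset.card_insert_of_notMem fun h => hcol _ h rfl, hcard]

/-- If `M` is a rainbow matching of size `s` and `R` is a color not on `M` whose color
class has at least `2 * s + 1` connected components containing an edge, then some edge
`e` of color `R` has both endpoints uncovered by `M`, and `M ∪ {e}` is a rainbow
matching of size `s + 1`. -/
theorem extend_at_many_color_class_components [Fintype V] [DecidableEq V]
    (G : SimpleGraph V) (c : Sym2 V → α)
    (M : Finset (Sym2 V)) (s : ℕ) (hM : IsRainbowMatching G c M) (hcard : M.card = s)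
    (R : α) (hR : ∀ e ∈ M, c e ≠ R)
    (hcomp : 2 * s + 1 ≤
      {K : (colorClass G c R).ConnectedComponent |
        ∃ a b : V, (colorClass G c R).Adj a b ∧
          (colorClass G c R).connectedComponentMk a = K}.ncard) :
    ∃ e ∈ G.edgeSet, c e = R ∧ (∀ w : V, w ∈ e → ∀ f ∈ M, w ∉ f) ∧
      IsRainbowMatching G c (insert e M) ∧ (insert e M).card = s + 1 :=
  extend_at_many_color_class_components_general G c M s hM hcard R hR hcomp
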